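/- Fix a partition λ of n into k parts. For any standard basis vectors |u⟩, |v⟩ of (ℂ^d)^⊗n with the same weight vector w given by w_i = λ_i for i ≤ k and w_i = 0 otherwise, if B_λ^- |u⟩ ≠ 0 and B_λ^- |v⟩ ≠ 0 where B_λ^- := Σ_{b∈B_λ} sgn(b) P_b, then there exists π ∈ B_λ such that B_λ^- |v⟩ = sgn(π) · B_λ^- |u⟩. Consequently, the image of the weight subspace V(w) under the Young symmetrizer Y_λ is exactly one-dimensional. -/

import Mathlib

open Matrix
open scoped Kronecker ENNReal

noncomputable section

def permOp (d n : ℕ) (π : Equiv.Perm (Fin n)) :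
    Matrix (Fin n → Fin d) (Fin n → Fin d) ℂ :=
  Matrix.of fun x y => if y = x ∘ π then 1 else 0

def rowSum (lam : ℕ → ℕ) (r : ℕ) : ℕ := ∑ i ∈ Finset.range r, lam i

def rowOf (lam : ℕ → ℕ) (j : ℕ) : ℕ :=
  Nat.findGreatest (fun r => rowSum lam r ≤ j) j

def colOf (lam : ℕ → ℕ) (j : ℕ) : ℕ := j - rowSum lam (rowOf lam j)

def rowStab (lam : ℕ → ℕ) (n : ℕ) : Finset (Equiv.Perm (Fin n)) :=
  Finset.univ.filter fun π => ∀ j : Fin n, rowOf lam (π j : ℕ) = rowOf lam (j : ℕ)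

def colStab (lam : ℕ → ℕ) (n : ℕ) : Finset (Equiv.Perm (Fin n)) :=
  Finset.univ.filter fun π => ∀ j : Fin n, colOf lam (π j : ℕ) = colOf lam (j : ℕ)

def colSign (d n : ℕ) (lam : ℕ → ℕ) : Matrix (Fin n → Fin d) (Fin n → Fin d) ℂ :=
  ∑ b ∈ colStab lam n, ((Equiv.Perm.sign b : ℤ) : ℂ) • permOp d n b

def youngSym (d n : ℕ) (lam : ℕ → ℕ) : Matrix (Fin n → Fin d) (Fin n → Fin d) ℂ :=
  (∑ a ∈ rowStab lam n, permOp d n a) * colSign d n lam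

def weight (d n : ℕ) (e : Fin n → Fin d) : Fin d → ℕ :=
  fun i => (Finset.univ.filter fun j => e j = i).card

def tpow (d n : ℕ) (U : Matrix (Fin d) (Fin d) ℂ) :
    Matrix (Fin n → Fin d) (Fin n → Fin d) ℂ :=
  Matrix.of fun x y => ∏ i, U (x i) (y i)

section NumLemmas
variable {k n : ℕ} {lam : ℕ → ℕ}

lemma rowSum_mono : Monotone (rowSum lam) := fun _ _ h =>
  Finset.sum_le_sum_of_subset (Finset.range_subset_range.2 h)

lemma rowSum_succ (r : ℕ) : rowSum lam (r + 1) = rowSum lam r + lam r :=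
  Finset.sum_range_succ _ _

lemma le_rowSum (hpos : ∀ i < k, 0 < lam i) {r : ℕ} (hr : r ≤ k) : r ≤ rowSum lam r := by
  calc r = ∑ i ∈ Finset.range r, 1 := by simp
  _ ≤ rowSum lam r := Finset.sum_le_sum fun i hi =>
      hpos i (lt_of_lt_of_le (Finset.mem_range.1 hi) hr)

lemma rowOf_le_self (j : ℕ) : rowSum lam (rowOf lam j) ≤ j := by
  rw [rowOf]
  exact Nat.findGreatest_spec (P := fun m => rowSum lam m ≤ j) (Nat.zero_le j)
    (by simp [rowSum])

lemma rowOf_spec (hpos : ∀ i < k, 0 < lam i) {r c : ℕ} (hr : r < k) (hc : c < lam r) :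
    rowOf lam (rowSum lam r + c) = r := by
  set j := rowSum lam r + c with hj
  have h1 : r ≤ j := le_trans (le_rowSum hpos hr.le) (Nat.le_add_right _ _)
  have h2 : rowSum lam r ≤ j := Nat.le_add_right _ _
  have hlt : j < rowSum lam (r + 1) := by rw [rowSum_succ]; omega
  have hge : r ≤ rowOf lam j := Nat.le_findGreatest h1 h2
  have hspec : rowSum lam (rowOf lam j) ≤ j := rowOf_le_self j
  have hle : rowOf lam j ≤ r := by
    by_contra hcon
    push_neg at hcon
    exact absurd (le_trans (rowSum_mono hcon) hspec) (not_le.2 hlt)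
  omega

lemma colOf_spec (hpos : ∀ i < k, 0 < lam i) {r c : ℕ} (hr : r < k) (hc : c < lam r) :
    colOf lam (rowSum lam r + c) = c := by
  rw [colOf, rowOf_spec hpos hr hc]; omega

lemma rowOf_lt (hpos : ∀ i < k, 0 < lam i) (hsum : rowSum lam k = n) {j : ℕ} (hjn : j < n) :
    rowOf lam j < k ∧ colOf lam j < lam (rowOf lam j) ∧
      rowSum lam (rowOf lam j) + colOf lam j = j := by
  set r := rowOf lam j with hr
  have hspec : rowSum lam r ≤ j := rowOf_le_self j
  have hcol : colOf lam j = j - rowSum lam r := rfl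
  have hrk : r < k := by
    by_contra hcon
    push_neg at hcon
    have := rowSum_mono (lam := lam) hcon
    omega
  refine ⟨hrk, ?_, by omega⟩
  by_contra hcon
  push_neg at hcon
  have hsle : rowSum lam (r + 1) ≤ j := by rw [rowSum_succ]; omega
  have h1 : r + 1 ≤ j := le_trans (le_rowSum hpos hrk) hsle
  have : r + 1 ≤ rowOf lam j := Nat.le_findGreatest h1 hsle
  omega

lemma pos_inj (hpos : ∀ i < k, 0 < lam i) (hsum : rowSum lam k = n) {j j' : ℕ}
    (hj : j < n) (hj' : j' < n) (h1 : rowOf lam j = rowOf lam j')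
    (h2 : colOf lam j = colOf lam j') : j = j' := by
  have a := rowOf_lt hpos hsum hj
  have b := rowOf_lt hpos hsum hj'
  rw [h1, h2] at a
  omega

end NumLemmas

section GroupLemmas
variable {d n k : ℕ} {lam : ℕ → ℕ}

lemma one_mem_colStab : (1 : Equiv.Perm (Fin n)) ∈ colStab lam n := by
  simp [colStab]

lemma mul_mem_colStab {a b : Equiv.Perm (Fin n)} (ha : a ∈ colStab lam n)
    (hb : b ∈ colStab lam n) : a * b ∈ colStab lam n := by
  simp only [colStab, Finset.mem_filter, Finset.mem_univ, true_and] at *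
  intro j
  rw [Equiv.Perm.mul_apply, ha, hb]

lemma inv_mem_colStab {a : Equiv.Perm (Fin n)} (ha : a ∈ colStab lam n) :
    a⁻¹ ∈ colStab lam n := by
  simp only [colStab, Finset.mem_filter, Finset.mem_univ, true_and] at *
  intro j
  conv_rhs => rw [← (by simp : a (a⁻¹ j) = j)]
  rw [ha]

lemma one_mem_rowStab : (1 : Equiv.Perm (Fin n)) ∈ rowStab lam n := by
  simp [rowStab]

lemma sum_mulVec {ι A : Type*} [Fintype A] [DecidableEq A] (s : Finset ι)
    (f : ι → Matrix A A ℂ) (v : A → ℂ) :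
    (∑ i ∈ s, f i).mulVec v = ∑ i ∈ s, (f i).mulVec v := by
  induction s using Finset.cons_induction with
  | empty => simp [Matrix.zero_mulVec]
  | cons a s ha ih => rw [Finset.sum_cons, Finset.sum_cons, Matrix.add_mulVec, ih]

lemma permOp_mulVec_single (π : Equiv.Perm (Fin n)) (u : Fin n → Fin d) :
    (permOp d n π).mulVec (Pi.single u 1) = Pi.single (u ∘ ⇑π⁻¹) (1 : ℂ) := by
  funext x
  rw [Matrix.mulVec, dotProduct]
  simp only [permOp, Matrix.of_apply]
  rw [Finset.sum_eq_single (x ∘ ⇑π)]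
  · simp only [if_pos rfl, one_mul]
    by_cases h : x = u ∘ ⇑π⁻¹
    · subst h
      have : (u ∘ ⇑π⁻¹) ∘ ⇑π = u := by funext i; simp
      rw [this]
      simp
    · have h2 : x ∘ ⇑π ≠ u := by
        intro hc
        apply h
        funext i
        rw [← hc]
        simp
      rw [Pi.single_eq_of_ne h2, Pi.single_eq_of_ne h]
      simp
  · intro y _ hy
    rw [if_neg (by exact fun hc => hy hc), zero_mul]
  · intro hc
    exact absurd (Finset.mem_univ _) hc

lemma colSign_mulVec_single (u : Fin n → Fin d) :
    (colSign d n lam).mulVec (Pi.single u 1) =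
      ∑ b ∈ colStab lam n, ((Equiv.Perm.sign b : ℤ) : ℂ) •
        (Pi.single (u ∘ ⇑b⁻¹) 1 : (Fin n → Fin d) → ℂ) := by
  rw [colSign, _root_.sum_mulVec]
  refine Finset.sum_congr rfl fun b _ => ?_
  rw [Matrix.smul_mulVec, permOp_mulVec_single]

lemma colSign_mulVec_comp (u : Fin n → Fin d) {σ : Equiv.Perm (Fin n)}
    (hσ : σ ∈ colStab lam n) :
    (colSign d n lam).mulVec (Pi.single (u ∘ ⇑σ) 1) =
      ((Equiv.Perm.sign σ : ℤ) : ℂ) • (colSign d n lam).mulVec (Pi.single u 1) := by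
  rw [colSign_mulVec_single, colSign_mulVec_single, Finset.smul_sum]
  refine Finset.sum_nbij' (fun b => b * σ⁻¹) (fun b => b * σ) ?_ ?_ ?_ ?_ ?_
  · intro b hb; exact mul_mem_colStab hb (inv_mem_colStab hσ)
  · intro b hb; exact mul_mem_colStab hb hσ
  · intro b _; simp [mul_assoc]
  · intro b _; simp [mul_assoc]
  · intro b _
    rw [smul_smul]
    congr 1
    · rw [Equiv.Perm.sign_mul]
      rcases Int.units_eq_one_or (Equiv.Perm.sign σ) with h | h <;>
        rcases Int.units_eq_one_or (Equiv.Perm.sign b) with h2 | h2 <;>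
          simp [h, h2]

end GroupLemmas

section MainLemmas
variable {d n k : ℕ} {lam : ℕ → ℕ}

lemma eq_zero_of_eq_neg {A : Type*} [AddCommGroup A] [Module ℂ A] {x : A}
    (h : x = (((-1 : ℤ) : ℂ)) • x) : x = 0 := by
  have h2 : ((-1 : ℤ) : ℂ) = -1 := by norm_num
  rw [h2, neg_one_smul] at h
  have : x + x = 0 := by nth_rewrite 1 [h]; abel
  have h3 : (2 : ℂ) • x = 0 := by rw [two_smul]; exact this
  simpa using (smul_eq_zero.mp h3).resolve_left (by norm_num)

/-- If `e` repeats a value within a column, the signed column sum kills it. -/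
lemma colSign_mulVec_eq_zero_of_repeat (e : Fin n → Fin d) {j j' : Fin n}
    (hne : j ≠ j') (hcol : colOf lam (j : ℕ) = colOf lam (j' : ℕ)) (hval : e j = e j') :
    (colSign d n lam).mulVec (Pi.single e 1) = 0 := by
  set τ := Equiv.swap j j' with hτ
  have hτmem : τ ∈ colStab lam n := by
    simp only [colStab, Finset.mem_filter, Finset.mem_univ, true_and]
    intro x
    rcases eq_or_ne x j with rfl | h1
    · rw [hτ, Equiv.swap_apply_left]; exact hcol.symm
    rcases eq_or_ne x j' with rfl | h2
    · rw [hτ, Equiv.swap_apply_right]; exact hcol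
    · rw [hτ, Equiv.swap_apply_of_ne_of_ne h1 h2]
  have hcomp : e ∘ ⇑τ = e := by
    funext x
    rcases eq_or_ne x j with rfl | h1
    · rw [hτ]; simp [Equiv.swap_apply_left, hval.symm]
    rcases eq_or_ne x j' with rfl | h2
    · rw [hτ]; simp [Equiv.swap_apply_right, hval]
    · rw [hτ]; simp [Equiv.swap_apply_of_ne_of_ne h1 h2]
  have := colSign_mulVec_comp (lam := lam) e hτmem
  rw [hcomp, Equiv.Perm.sign_swap hne] at this
  exact eq_zero_of_eq_neg this

variable (hkd : k ≤ d) (hanti : Antitone lam) (hpos : ∀ i < k, 0 < lam i)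
  (hzero : ∀ i, k ≤ i → lam i = 0) (hsum : rowSum lam k = n)

/-- The canonical filling: position `j` gets value `rowOf j`. -/
def canonFill (hkd : k ≤ d) (hpos : ∀ i < k, 0 < lam i) (hsum : rowSum lam k = n) :
    Fin n → Fin d :=
  fun j => ⟨rowOf lam (j : ℕ), lt_of_lt_of_le (rowOf_lt hpos hsum j.isLt).1 hkd⟩

include hkd hanti hpos hzero hsum in
/-- Main combinatorial claim: in a column-injective filling of weight `lam`,
the values of row `i` fill exactly the columns `c < lam i`. -/
lemma col_values (e : Fin n → Fin d) (hwt : ∀ i : Fin d, weight d n e i = lam (i : ℕ))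
    (hinj : ∀ j j' : Fin n, j ≠ j' → colOf lam (j : ℕ) = colOf lam (j' : ℕ) → e j ≠ e j') :
    ∀ i < k, (∀ j : Fin n, (e j : ℕ) = i → colOf lam (j : ℕ) < lam i) ∧
      (∀ c < lam i, ∃ j : Fin n, (e j : ℕ) = i ∧ colOf lam (j : ℕ) = c) := by
  intro i
  induction i using Nat.strong_induction_on with
  | _ i IH =>
  intro hik
  have claim1 : ∀ j : Fin n, (e j : ℕ) = i → colOf lam (j : ℕ) < lam i := by
    intro j hj
    by_contra hc
    push_neg at hc
    set c := colOf lam (j : ℕ) with hcdef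
    set S : Finset ℕ := (Finset.range i).filter (fun i' => c < lam i') with hS
    set T : Finset ℕ := (Finset.range k).filter (fun r => c < lam r) with hT
    -- choose witnesses for each i' ∈ S
    have hwit : ∀ i' ∈ S, ∃ j' : Fin n, (e j' : ℕ) = i' ∧ colOf lam (j' : ℕ) = c := by
      intro i' hi'
      simp only [hS, Finset.mem_filter, Finset.mem_range] at hi'
      exact (IH i' hi'.1 (hi'.1.trans hik)).2 c hi'.2
    choose F hF1 hF2 using hwit
    -- extend to insert i S using j
    have hiS : i ∉ S := by simp [hS]
    set F' : ℕ → Fin n := fun i' => if h : i' ∈ S then F i' h else j with hF'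
    have hFval : ∀ i' ∈ insert i S, (e (F' i') : ℕ) = i' ∧ colOf lam ((F' i') : ℕ) = c := by
      intro i' hi'
      rcases Finset.mem_insert.mp hi' with rfl | hmem
      · rw [hF']; simp only [dif_neg hiS]
        exact ⟨hj, rfl⟩
      · rw [hF']; simp only [dif_pos hmem]; exact ⟨hF1 i' hmem, hF2 i' hmem⟩
    -- map to rows
    have hcard : (insert i S).card ≤ T.card := by
      apply Finset.card_le_card_of_injOn (fun i' => rowOf lam ((F' i') : ℕ))
      · intro i' hi'
        obtain ⟨h1, h2⟩ := hFval i' hi'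
        obtain ⟨hr1, hr2, _⟩ := rowOf_lt hpos hsum (F' i').isLt
        simp only [hT, Finset.mem_coe, Finset.mem_filter, Finset.mem_range]
        exact ⟨hr1, h2 ▸ hr2⟩
      · intro i1 h1 i2 h2 heq
        have e1 := hFval i1 h1
        have e2 := hFval i2 h2
        have : F' i1 = F' i2 := by
          apply Fin.ext
          exact pos_inj hpos hsum (F' i1).isLt (F' i2).isLt heq (by rw [e1.2, e2.2])
        rw [← e1.1, ← e2.1, this]
    have hTS : T ⊆ S := by
      intro r hr
      simp only [hT, Finset.mem_filter, Finset.mem_range] at hr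
      have hri : r < i := by
        by_contra hcon
        push_neg at hcon
        exact absurd (lt_of_le_of_lt hc hr.2) (not_lt.2 (hanti hcon))
      simp only [hS, Finset.mem_filter, Finset.mem_range]
      exact ⟨hri, hr.2⟩
    rw [Finset.card_insert_of_notMem hiS] at hcard
    have := Finset.card_le_card hTS
    omega
  refine ⟨claim1, ?_⟩
  -- surjectivity onto columns via cardinality
  set iF : Fin d := ⟨i, lt_of_lt_of_le hik hkd⟩ with hiF
  set fiber := Finset.univ.filter (fun j : Fin n => e j = iF) with hfib
  have hcardfib : fiber.card = lam i := hwt iF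
  have hinjOn : Set.InjOn (fun j : Fin n => colOf lam (j : ℕ)) fiber := by
    intro j1 h1 j2 h2 heq
    simp only [hfib, Finset.coe_filter, Set.mem_setOf_eq] at h1 h2
    by_contra hne
    exact hinj j1 j2 hne heq (h1.2.trans h2.2.symm)
  have himage : fiber.image (fun j : Fin n => colOf lam (j : ℕ)) = Finset.range (lam i) := by
    apply Finset.eq_of_subset_of_card_le
    · intro c hc
      obtain ⟨j, hj, rfl⟩ := Finset.mem_image.mp hc
      simp only [hfib, Finset.mem_filter] at hj
      exact Finset.mem_range.mpr (claim1 j (by rw [hj.2]))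
    · rw [Finset.card_range, Finset.card_image_of_injOn hinjOn, hcardfib]
  intro c hc
  have : c ∈ fiber.image (fun j : Fin n => colOf lam (j : ℕ)) := by
    rw [himage]; exact Finset.mem_range.mpr hc
  obtain ⟨j, hj, hcol⟩ := Finset.mem_image.mp this
  simp only [hfib, Finset.mem_filter] at hj
  exact ⟨j, by rw [hj.2], hcol⟩

include hkd hanti hpos hzero hsum in
lemma exists_colPerm (e : Fin n → Fin d) (hwt : ∀ i : Fin d, weight d n e i = lam (i : ℕ))
    (hinj : ∀ j j' : Fin n, j ≠ j' → colOf lam (j : ℕ) = colOf lam (j' : ℕ) → e j ≠ e j') :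
    ∃ b ∈ colStab lam n, e = (canonFill hkd hpos hsum) ∘ ⇑b := by
  have hek : ∀ j : Fin n, (e j : ℕ) < k := by
    intro j
    by_contra hcon
    push_neg at hcon
    have h0 : lam ((e j : ℕ)) = 0 := hzero _ hcon
    have : weight d n e (e j) = 0 := by rw [hwt (e j), h0]
    have hjmem : j ∈ Finset.univ.filter (fun j' : Fin n => e j' = e j) :=
      Finset.mem_filter.mpr ⟨Finset.mem_univ _, rfl⟩
    rw [weight] at this
    exact absurd this (by
      intro hcc
      exact absurd (Finset.card_eq_zero.mp hcc ▸ hjmem) (Finset.notMem_empty j))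
  have hfits : ∀ j : Fin n, colOf lam (j : ℕ) < lam ((e j : ℕ)) := fun j =>
    (col_values hkd hanti hpos hzero hsum e hwt hinj ((e j : ℕ)) (hek j)).1 j rfl
  have hlt : ∀ j : Fin n, rowSum lam ((e j : ℕ)) + colOf lam (j : ℕ) < n := by
    intro j
    have h1 : rowSum lam ((e j : ℕ)) + colOf lam (j : ℕ) < rowSum lam ((e j : ℕ) + 1) := by
      rw [rowSum_succ]; have := hfits j; omega
    have h2 : rowSum lam ((e j : ℕ) + 1) ≤ rowSum lam k := rowSum_mono (hek j)
    omega
  set bf : Fin n → Fin n := fun j => ⟨rowSum lam ((e j : ℕ)) + colOf lam (j : ℕ), hlt j⟩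
    with hbf
  have hrow : ∀ j : Fin n, rowOf lam ((bf j : ℕ)) = (e j : ℕ) := fun j =>
    rowOf_spec hpos (hek j) (hfits j)
  have hcol : ∀ j : Fin n, colOf lam ((bf j : ℕ)) = colOf lam (j : ℕ) := fun j =>
    colOf_spec hpos (hek j) (hfits j)
  have hbinj : Function.Injective bf := by
    intro j1 j2 h
    have h1 : colOf lam ((j1 : ℕ)) = colOf lam ((j2 : ℕ)) := by
      rw [← hcol j1, ← hcol j2, h]
    have h2 : e j1 = e j2 := by
      apply Fin.ext
      have := hrow j1
      rw [h, hrow j2] at this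
      exact this.symm
    by_contra hne
    exact hinj j1 j2 hne h1 h2
  set b : Equiv.Perm (Fin n) := Equiv.ofBijective bf
    (Finite.injective_iff_bijective.mp hbinj) with hb
  refine ⟨b, ?_, ?_⟩
  · simp only [colStab, Finset.mem_filter, Finset.mem_univ, true_and]
    intro j
    rw [hb]
    exact hcol j
  · funext j
    apply Fin.ext
    show (e j : ℕ) = rowOf lam ((b j : ℕ))
    rw [hb]
    exact (hrow j).symm

end MainLemmas

section FinalLemmas
variable {d n k : ℕ} {lam : ℕ → ℕ}
variable (hkd : k ≤ d) (hanti : Antitone lam) (hpos : ∀ i < k, 0 < lam i)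
  (hzero : ∀ i, k ≤ i → lam i = 0) (hsum : rowSum lam k = n)

include hzero in
lemma weight_canonFill : ∀ i : Fin d, weight d n (canonFill hkd hpos hsum) i = lam (i : ℕ) := by
  intro i
  rw [weight]
  have himg : (Finset.univ.filter fun j : Fin n => canonFill hkd hpos hsum j = i).card =
      ((Finset.range n).filter fun j => rowOf lam j = (i : ℕ)).card := by
    rw [← Finset.card_image_of_injective _ Fin.val_injective]
    congr 1
    ext x
    simp only [Finset.mem_image, Finset.mem_filter, Finset.mem_univ, true_and,
      Finset.mem_range]
    constructor
    · rintro ⟨j, hj, rfl⟩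
      exact ⟨j.isLt, congrArg Fin.val hj⟩
    · rintro ⟨hx, hr⟩
      exact ⟨⟨x, hx⟩, Fin.ext hr, rfl⟩
  rw [himg]
  by_cases hik : (i : ℕ) < k
  · rw [← Finset.card_range (lam (i : ℕ))]
    apply Finset.card_nbij' (colOf lam) (fun c => rowSum lam (i : ℕ) + c)
    · intro j hj
      simp only [Finset.mem_coe, Finset.mem_filter, Finset.mem_range] at hj
      obtain ⟨hr1, hr2, hr3⟩ := rowOf_lt hpos hsum hj.1
      rw [hj.2] at hr2
      exact Finset.mem_range.mpr hr2
    · intro c hc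
      simp only [Finset.mem_coe, Finset.mem_range] at hc
      simp only [Finset.mem_coe, Finset.mem_filter, Finset.mem_range]
      refine ⟨?_, rowOf_spec hpos hik hc⟩
      have h1 : rowSum lam ((i : ℕ)) + c < rowSum lam ((i : ℕ) + 1) := by
        rw [rowSum_succ]; omega
      have h2 : rowSum lam ((i : ℕ) + 1) ≤ rowSum lam k := rowSum_mono hik
      omega
    · intro j hj
      simp only [Finset.mem_coe, Finset.mem_filter, Finset.mem_range] at hj
      obtain ⟨hr1, hr2, hr3⟩ := rowOf_lt hpos hsum hj.1
      rw [← hj.2]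
      exact hr3
    · intro c hc
      exact colOf_spec hpos hik (Finset.mem_range.mp hc)
  · push_neg at hik
    rw [hzero _ hik]
    rw [Finset.card_eq_zero, Finset.filter_eq_empty_iff]
    intro j hj
    intro hcc
    have := (rowOf_lt hpos hsum (Finset.mem_range.mp hj)).1
    omega

lemma permOp_mulVec_apply (π : Equiv.Perm (Fin n)) (X : (Fin n → Fin d) → ℂ)
    (x : Fin n → Fin d) : ((permOp d n π).mulVec X) x = X (x ∘ ⇑π) := by
  rw [Matrix.mulVec, dotProduct]
  simp only [permOp, Matrix.of_apply, ite_mul, one_mul, zero_mul]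
  rw [Finset.sum_ite_eq' Finset.univ (x ∘ ⇑π) X]
  simp

include hkd hanti hpos hzero hsum in
lemma youngSym_canonFill_ne_zero :
    (youngSym d n lam).mulVec (Pi.single (canonFill hkd hpos hsum) 1) ≠ 0 := by
  set e0 := canonFill hkd hpos hsum with he0
  intro hcc
  have hXc : (colSign d n lam).mulVec (Pi.single e0 1) =
      ∑ b ∈ colStab lam n, ((Equiv.Perm.sign b : ℤ) : ℂ) •
        (Pi.single (e0 ∘ ⇑b⁻¹) 1 : (Fin n → Fin d) → ℂ) := colSign_mulVec_single e0
  have hy : (youngSym d n lam).mulVec (Pi.single e0 1) =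
      (∑ a ∈ rowStab lam n, permOp d n a).mulVec
        ((colSign d n lam).mulVec (Pi.single e0 1)) := by
    rw [Matrix.mulVec_mulVec]; rfl
  have key : ((youngSym d n lam).mulVec (Pi.single e0 1)) e0 =
      ((rowStab lam n).card : ℂ) := by
    rw [hy, _root_.sum_mulVec]
    rw [Finset.sum_apply]
    have hterm : ∀ a ∈ rowStab lam n,
        ((permOp d n a).mulVec ((colSign d n lam).mulVec (Pi.single e0 1))) e0 = 1 := by
      intro a ha
      rw [permOp_mulVec_apply, hXc, Finset.sum_apply]
      rw [Finset.sum_eq_single_of_mem 1 one_mem_colStab]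
      · have : e0 ∘ ⇑a = e0 := by
          funext j
          apply Fin.ext
          show rowOf lam ((a j : Fin n) : ℕ) = rowOf lam (j : ℕ)
          simp only [rowStab, Finset.mem_filter, Finset.mem_univ, true_and] at ha
          exact ha j
        simp [this, Pi.single_apply]
      · intro b hb hbne
        have hcond : e0 ∘ ⇑a ≠ e0 ∘ ⇑b⁻¹ := by
          intro hcc2
          apply hbne
          have hbinv : ∀ j : Fin n, b⁻¹ j = j := by
            intro j
            have h1 : rowOf lam ((b⁻¹ j : Fin n) : ℕ) = rowOf lam (j : ℕ) := by
              have := congrFun hcc2 j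
              have h2 : rowOf lam ((a j : Fin n) : ℕ) = rowOf lam (j : ℕ) := by
                simp only [rowStab, Finset.mem_filter, Finset.mem_univ, true_and] at ha
                exact ha j
              have h3 : rowOf lam ((a j : Fin n) : ℕ) = rowOf lam ((b⁻¹ j : Fin n) : ℕ) :=
                congrArg Fin.val this
              omega
            have h4 : colOf lam ((b⁻¹ j : Fin n) : ℕ) = colOf lam (j : ℕ) := by
              have := inv_mem_colStab hb
              simp only [colStab, Finset.mem_filter, Finset.mem_univ, true_and] at this
              exact this j
            exact Fin.ext (pos_inj hpos hsum (b⁻¹ j).isLt j.isLt h1 h4)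
          apply Equiv.ext
          intro j
          have := hbinv (b j)
          rw [(by simp : b⁻¹ (b j) = j)] at this
          rw [Equiv.Perm.one_apply]
          exact this.symm
        simpa [Pi.single_apply] using hcond
    rw [Finset.sum_congr rfl hterm, Finset.sum_const, nsmul_eq_mul, mul_one]
  rw [hcc] at key
  simp only [Pi.zero_apply] at key
  have hpos' : 0 < (rowStab lam n).card :=
    Finset.card_pos.mpr ⟨1, one_mem_rowStab⟩
  have := key.symm
  rw [Nat.cast_eq_zero] at this
  omega

end FinalLemmas

/-- For the lexicographically largest weight vector `w` matching a partition `lam` of `n`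
into `k ≤ d` parts: any two standard basis vectors of weight `w` not annihilated by the
signed column sum `B_λ^- = Σ_{b ∈ B_λ} sgn(b) P_b` have images agreeing up to the sign of a
column permutation; consequently the image of the weight subspace `V(w)` under the Young
symmetrizer `Y_λ` is one-dimensional. -/
theorem youngSym_weightSpace_one_dimensional (d n k : ℕ) (hkd : k ≤ d) (lam : ℕ → ℕ)
    (hanti : Antitone lam) (hpos : ∀ i < k, 0 < lam i) (hzero : ∀ i, k ≤ i → lam i = 0)
    (hsum : rowSum lam k = n)
    (w : Fin d → ℕ) (hw : ∀ i : Fin d, w i = lam (i : ℕ)) :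
    (∀ u v : Fin n → Fin d, weight d n u = w → weight d n v = w →
        (colSign d n lam).mulVec (Pi.single u 1) ≠ 0 →
        (colSign d n lam).mulVec (Pi.single v 1) ≠ 0 →
        ∃ π ∈ colStab lam n,
          (colSign d n lam).mulVec (Pi.single v 1) =
            ((Equiv.Perm.sign π : ℤ) : ℂ) • (colSign d n lam).mulVec (Pi.single u 1)) ∧
    Module.finrank ℂ
      ↥(Submodule.map (youngSym d n lam).mulVecLin
          (Submodule.span ℂ {x : (Fin n → Fin d) → ℂ |
            ∃ e : Fin n → Fin d, weight d n e = w ∧ x = Pi.single e 1})) = 1 := by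
  set e0 := canonFill hkd hpos hsum with he0
  -- reduction: any weight-w vector not killed is a signed translate of e0's image
  have main : ∀ u : Fin n → Fin d, weight d n u = w →
      (colSign d n lam).mulVec (Pi.single u 1) ≠ 0 →
      ∃ b ∈ colStab lam n,
        (colSign d n lam).mulVec (Pi.single u 1) =
          ((Equiv.Perm.sign b : ℤ) : ℂ) • (colSign d n lam).mulVec (Pi.single e0 1) := by
    intro u hu hBu
    have hwt : ∀ i : Fin d, weight d n u i = lam (i : ℕ) := fun i =>
      (congrFun hu i).trans (hw i)
    have hinj : ∀ j j' : Fin n, j ≠ j' → colOf lam (j : ℕ) = colOf lam (j' : ℕ) →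
        u j ≠ u j' := by
      intro j j' hne hcol heq
      exact hBu (colSign_mulVec_eq_zero_of_repeat u hne hcol heq)
    obtain ⟨b, hb, hue⟩ := exists_colPerm hkd hanti hpos hzero hsum u hwt hinj
    refine ⟨b, hb, ?_⟩
    rw [hue]
    exact colSign_mulVec_comp e0 hb
  have part1 : ∀ u v : Fin n → Fin d, weight d n u = w → weight d n v = w →
      (colSign d n lam).mulVec (Pi.single u 1) ≠ 0 →
      (colSign d n lam).mulVec (Pi.single v 1) ≠ 0 →
      ∃ π ∈ colStab lam n,
        (colSign d n lam).mulVec (Pi.single v 1) =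
          ((Equiv.Perm.sign π : ℤ) : ℂ) • (colSign d n lam).mulVec (Pi.single u 1) := by
    intro u v hu hv hBu hBv
    obtain ⟨bu, hbu, Hu⟩ := main u hu hBu
    obtain ⟨bv, hbv, Hv⟩ := main v hv hBv
    refine ⟨bv * bu⁻¹, mul_mem_colStab hbv (inv_mem_colStab hbu), ?_⟩
    rw [Hv, Hu, smul_smul]
    congr 1
    rw [Equiv.Perm.sign_mul, Equiv.Perm.sign_inv]
    rcases Int.units_eq_one_or (Equiv.Perm.sign bu) with h | h <;>
      rcases Int.units_eq_one_or (Equiv.Perm.sign bv) with h2 | h2 <;>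
        simp [h, h2]
  refine ⟨part1, ?_⟩
  -- part 2
  set L := (youngSym d n lam).mulVecLin with hL
  set y := (youngSym d n lam).mulVec (Pi.single e0 1) with hy
  have hyL : L (Pi.single e0 1) = y := by rw [hL, Matrix.mulVecLin_apply]
  have hyne : y ≠ 0 := youngSym_canonFill_ne_zero hkd hanti hpos hzero hsum
  have hwt0 : weight d n e0 = w := by
    funext i
    rw [weight_canonFill hkd hpos hzero hsum i, hw i]
  rw [Submodule.map_span]
  have hspan : Submodule.span ℂ (⇑L '' {x : (Fin n → Fin d) → ℂ |
      ∃ e : Fin n → Fin d, weight d n e = w ∧ x = Pi.single e 1}) =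
      Submodule.span ℂ {y} := by
    apply le_antisymm
    · rw [Submodule.span_le]
      rintro x ⟨x', ⟨e, he, rfl⟩, rfl⟩
      have : L (Pi.single e 1) ∈ Submodule.span ℂ {y} := by
        by_cases hrep : ∃ j j' : Fin n, j ≠ j' ∧ colOf lam (j : ℕ) = colOf lam (j' : ℕ) ∧
            e j = e j'
        · obtain ⟨j, j', hne, hcol, heq⟩ := hrep
          have hz : (colSign d n lam).mulVec (Pi.single e 1) = 0 :=
            colSign_mulVec_eq_zero_of_repeat e hne hcol heq
          have : L (Pi.single e 1) = 0 := by
            rw [hL, Matrix.mulVecLin_apply, youngSym, ← Matrix.mulVec_mulVec, hz,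
              Matrix.mulVec_zero]
          rw [this]
          exact Submodule.zero_mem _
        · push_neg at hrep
          have hinj : ∀ j j' : Fin n, j ≠ j' → colOf lam (j : ℕ) = colOf lam (j' : ℕ) →
              e j ≠ e j' := fun j j' h1 h2 => hrep j j' h1 h2
          have hwt : ∀ i : Fin d, weight d n e i = lam (i : ℕ) := fun i =>
            (congrFun he i).trans (hw i)
          obtain ⟨b, hb, hue⟩ := exists_colPerm hkd hanti hpos hzero hsum e hwt hinj
          have : L (Pi.single e 1) = ((Equiv.Perm.sign b : ℤ) : ℂ) • y := by
            rw [hL, Matrix.mulVecLin_apply, youngSym, ← Matrix.mulVec_mulVec, hue,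
              colSign_mulVec_comp e0 hb, Matrix.mulVec_smul, hy, youngSym,
              ← Matrix.mulVec_mulVec]
          rw [this]
          exact Submodule.smul_mem _ _ (Submodule.mem_span_singleton_self y)
      exact this
    · rw [Submodule.span_le]
      rintro x hx
      rw [Set.mem_singleton_iff] at hx
      subst hx
      apply Submodule.subset_span
      exact ⟨Pi.single e0 1, ⟨e0, hwt0, rfl⟩, hyL⟩
  rw [hspan]
  exact finrank_span_singleton hyne
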